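/- arXiv:1502.04664 — 9 statements merged into one kernel-verified Lean document; each statement's English description precedes it below -/
import Mathlib

section
/- Suppose the numbers a_1 < a_2 < ... < a_m are positive and ordered ascendingly. Then the equation F(λ) = 0 has exactly m roots in ℂ; all of them are real and they interlace with the a_j. Precisely: there exist real numbers b_1, ..., b_m with a_j < b_j < a_{j+1} for j = 1, ..., m−1 and a_m < b_m, such that F(b_j) = 0 for each j, and moreover every λ ∈ ℂ \ {a_1, ..., a_m} with F(λ) = 0 equals b_j for some j ∈ {1, ..., m}. -/
/-!
With `cᵢ = aᵢ lᵢ / l₀ > 0`, `F` is the secular function `1 + ∑ cᵢ / (aᵢ - λ)`. On the reals it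
runs from `-∞` to `+∞` between two consecutive poles, and from `-∞` to `1` to the right of the
largest pole, so the intermediate value theorem gives a zero in each of these `m` gaps.
Conversely, clearing denominators turns `F(λ) = 0` into a monic polynomial equation of degree `m`,
which has at most `m` roots in `ℂ`; hence these real zeros are all the zeros.
-/

open Filter Topology Polynomial Finset Function Lagrange

variable {ι K : Type*} [Fintype ι]

def secular [Field K] (a c : ι → K) (z : K) : K :=
  1 + ∑ i, c i / (a i - z)

section Field

variable [Field K] [DecidableEq ι] (a c : ι → K)

lemma secular_sub_div (j : ι) (z : K) :
    secular a c z - c j / (a j - z) = 1 + ∑ i ∈ univ.erase j, c i / (a i - z) := by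
  rw [secular, ← add_sum_erase _ _ (mem_univ j)]
  ring

noncomputable def secularPoly : K[X] :=
  nodal univ a - ∑ i, C (c i) * nodal (univ.erase i) a

lemma degree_sum_C_mul_nodal_erase_lt :
    (∑ i, C (c i) * nodal (univ.erase i) a).degree < (nodal univ a).degree := by
  rw [degree_nodal, card_univ]
  refine (degree_sum_le _ _).trans_lt ((Finset.sup_lt_iff (WithBot.bot_lt_coe _)).2 fun i _ => ?_)
  have hcard : #(univ.erase i) < Fintype.card ι := card_erase_lt_of_mem (mem_univ i)
  calc (C (c i) * nodal (univ.erase i) a).degree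
      ≤ (C (c i)).degree + (nodal (univ.erase i) a).degree := degree_mul_le _ _
    _ ≤ 0 + #(univ.erase i) := by gcongr; exacts [degree_C_le, degree_nodal.le]
    _ < Fintype.card ι := by rw [zero_add]; exact_mod_cast hcard

lemma secularPoly_monic : (secularPoly a c).Monic :=
  nodal_monic.sub_of_left (degree_sum_C_mul_nodal_erase_lt a c)

lemma natDegree_secularPoly : (secularPoly a c).natDegree = Fintype.card ι := by
  rw [secularPoly, natDegree_eq_of_degree_eq (degree_sub_eq_left_of_degree_lt
    (degree_sum_C_mul_nodal_erase_lt a c)), natDegree_nodal, card_univ]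

lemma eval_secularPoly {z : K} (hz : ∀ i, z ≠ a i) :
    (secularPoly a c).eval z = (∏ i, (z - a i)) * secular a c z := by
  have hterm (i : ι) :
      (∏ k, (z - a k)) * (c i / (a i - z)) = -(c i * ∏ k ∈ univ.erase i, (z - a k)) := by
    rw [← mul_prod_erase _ _ (mem_univ i)]
    field_simp [sub_ne_zero.2 (hz i), sub_ne_zero.2 (hz i).symm]
    ring
  rw [secularPoly, eval_sub, eval_nodal, eval_finsetSum, secular, mul_add, mul_one, mul_sum]
  simp only [hterm, eval_mul, eval_C, eval_nodal, sum_neg_distrib, ← sub_eq_add_neg]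

end Field

theorem card_le_of_secular_eq_zero [Field K] (a c : ι → K) {s : Finset K}
    (hs : ∀ z ∈ s, (∀ i, z ≠ a i) ∧ secular a c z = 0) : #s ≤ Fintype.card ι := by
  classical
  rw [← natDegree_secularPoly a c]
  refine card_le_degree_of_subset_roots fun z hz => ?_
  obtain ⟨hpole, hzero⟩ := hs z hz
  rw [mem_roots (secularPoly_monic a c).ne_zero, IsRoot, eval_secularPoly a c hpole, hzero,
    mul_zero]

lemma tendsto_div_sub_nhdsGT {c p : ℝ} (hc : 0 < c) :
    Tendsto (fun x => c / (p - x)) (𝓝[>] p) atBot := by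
  have h : Tendsto (fun x => p - x) (𝓝[>] p) (𝓝[<] 0) := tendsto_nhdsWithin_iff.2
    ⟨(continuous_sub_left p).tendsto' p 0 (sub_self p) |>.mono_left nhdsWithin_le_nhds,
      eventually_nhdsWithin_of_forall fun _ hx => Set.mem_Iio.2 (sub_neg.2 hx)⟩
  simpa [div_eq_mul_inv] using h.inv_tendsto_nhdsLT_zero.const_mul_atBot hc

lemma tendsto_div_sub_nhdsLT {c p : ℝ} (hc : 0 < c) :
    Tendsto (fun x => c / (p - x)) (𝓝[<] p) atTop := by
  have h : Tendsto (fun x => p - x) (𝓝[<] p) (𝓝[>] 0) := tendsto_nhdsWithin_iff.2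
    ⟨(continuous_sub_left p).tendsto' p 0 (sub_self p) |>.mono_left nhdsWithin_le_nhds,
      eventually_nhdsWithin_of_forall fun _ hx => Set.mem_Ioi.2 (sub_pos.2 hx)⟩
  simpa [div_eq_mul_inv] using h.inv_tendsto_nhdsGT_zero.const_mul_atTop hc

section Real

variable {a c : ι → ℝ}

lemma continuousOn_secular {s : Set ℝ} (hs : ∀ i, a i ∉ s) : ContinuousOn (secular a c) s :=
  continuousOn_const.add <| continuousOn_finsetSum _ fun i _ =>
    continuousOn_const.div (continuousOn_const.sub continuousOn_id)
      fun _ hx => sub_ne_zero.2 (ne_of_mem_of_not_mem hx (hs i)).symm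

lemma continuousAt_secular_sub_div (ha : Injective a) (j : ι) :
    ContinuousAt (fun x => secular a c x - c j / (a j - x)) (a j) := by
  classical
  simp_rw [secular_sub_div]
  exact continuousAt_const.add <| tendsto_finsetSum _ fun i hi =>
    continuousAt_const.div (continuousAt_const.sub continuousAt_id)
      (sub_ne_zero.2 (ha.ne (ne_of_mem_erase hi)))

lemma tendsto_secular_nhdsGT (ha : Injective a) {j : ι} (hc : 0 < c j) :
    Tendsto (secular a c) (𝓝[>] a j) atBot :=
  (((continuousAt_secular_sub_div ha j).tendsto.mono_left nhdsWithin_le_nhds).add_atBot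
    (tendsto_div_sub_nhdsGT hc)).congr fun _ => sub_add_cancel _ _

lemma tendsto_secular_nhdsLT (ha : Injective a) {j : ι} (hc : 0 < c j) :
    Tendsto (secular a c) (𝓝[<] a j) atTop :=
  (((continuousAt_secular_sub_div ha j).tendsto.mono_left nhdsWithin_le_nhds).add_atTop
    (tendsto_div_sub_nhdsLT hc)).congr fun _ => sub_add_cancel _ _

lemma tendsto_secular_atTop : Tendsto (secular a c) atTop (𝓝 1) := by
  have h (i : ι) : Tendsto (fun x => c i / (a i - x)) atTop (𝓝 0) :=
    tendsto_const_nhds.div_atBot (tendsto_atBot_add_const_left _ _ tendsto_neg_atTop_atBot)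
  unfold secular
  simpa using tendsto_const_nhds.add (tendsto_finsetSum univ fun i _ => h i)

lemma exists_secular_eq_zero_mem_Ioo (ha : Injective a) {j k : ι} (hcj : 0 < c j)
    (hck : 0 < c k) (hjk : a j < a k) (hgap : ∀ i, a i ∉ Set.Ioo (a j) (a k)) :
    ∃ x ∈ Set.Ioo (a j) (a k), secular a c x = 0 :=
  isPreconnected_Ioo.intermediate_value_Iii (le_principal_iff.2 (Ioo_mem_nhdsGT hjk))
    (le_principal_iff.2 (Ioo_mem_nhdsLT hjk)) (continuousOn_secular hgap)
    (tendsto_secular_nhdsGT ha hcj) (tendsto_secular_nhdsLT ha hck) (Set.mem_univ 0)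

lemma exists_secular_eq_zero_mem_Ioi (ha : Injective a) {j : ι} (hc : 0 < c j)
    (hmax : ∀ i, a i ≤ a j) : ∃ x ∈ Set.Ioi (a j), secular a c x = 0 :=
  isPreconnected_Ioi.intermediate_value_Iio (le_principal_iff.2 self_mem_nhdsWithin)
    (le_principal_iff.2 (Ioi_mem_atTop _)) (continuousOn_secular fun i hi => (hmax i).not_gt hi)
    (tendsto_secular_nhdsGT ha hc) tendsto_secular_atTop (Set.mem_Iio.2 zero_lt_one)

end Real

section Interlacing

variable {α : Type*} [PartialOrder α] {m : ℕ}

lemma StrictMono.apply_ne_of_mem_gap {a : Fin m → α} (ha : StrictMono a) {j : Fin m} {x : α}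
    (hjx : a j < x) (hx : ∀ h : j.1 + 1 < m, x < a ⟨j.1 + 1, h⟩) (i : Fin m) : a i ≠ x := by
  rcases le_or_gt i j with hij | hji
  · exact ((ha.monotone hij).trans_lt hjx).ne
  · have h : j.1 + 1 < m := by omega
    exact ((hx h).trans_le (ha.monotone (Fin.le_def.2 hji))).ne'

lemma strictMono_of_interlace {a b : Fin m → α} (ha : Monotone a) (hab : ∀ j, a j < b j)
    (hba : ∀ j : Fin m, ∀ h : j.1 + 1 < m, b j < a ⟨j.1 + 1, h⟩) : StrictMono b := fun i j hij =>
  have h : i.1 + 1 < m := by omega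
  ((hba i h).trans_le (ha (Fin.le_def.2 hij))).trans (hab j)

lemma exists_secular_eq_zero_in_gap {a c : Fin m → ℝ} (ha : StrictMono a) (hc : ∀ i, 0 < c i)
    (j : Fin m) :
    ∃ x, a j < x ∧ (∀ h : j.1 + 1 < m, x < a ⟨j.1 + 1, h⟩) ∧ secular a c x = 0 := by
  by_cases h : j.1 + 1 < m
  · obtain ⟨x, ⟨hjx, hxk⟩, hx⟩ := exists_secular_eq_zero_mem_Ioo (k := ⟨j.1 + 1, h⟩)
      ha.injective (hc j) (hc _) (ha (Fin.lt_def.2 (Nat.lt_succ_self _))) fun i hi =>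
        ha.apply_ne_of_mem_gap hi.1 (fun _ => hi.2) i rfl
    exact ⟨x, hjx, fun _ => hxk, hx⟩
  · obtain ⟨x, hjx, hx⟩ := exists_secular_eq_zero_mem_Ioi ha.injective (hc j) fun i =>
      ha.monotone (Fin.le_def.2 (by omega))
    exact ⟨x, hjx, fun h' => absurd h' h, hx⟩

end Interlacing

theorem gaps_interlacing_roots_general
    (m : ℕ)
    (l0 : ℝ) (hl0 : 0 < l0)
    (l a : Fin m → ℝ) (hl : ∀ i, 0 < l i) (ha : ∀ i, 0 < a i)
    (hmono : ∀ i j : Fin m, i < j → a i < a j)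
    (F : ℂ → ℂ)
    (hF : ∀ lam : ℂ, F lam = 1 + ∑ i : Fin m,
      ((a i : ℂ) * (l i : ℂ)) / ((l0 : ℂ) * ((a i : ℂ) - lam))) :
    ∃ b : Fin m → ℝ,
      (∀ j : Fin m, a j < b j) ∧
      (∀ j : Fin m, ∀ h : j.1 + 1 < m, b j < a ⟨j.1 + 1, h⟩) ∧
      (∀ j : Fin m, F ((b j : ℂ)) = 0) ∧
      (∀ lam : ℂ, (∀ i : Fin m, lam ≠ (a i : ℂ)) → F lam = 0 →
        ∃ j : Fin m, lam = (b j : ℂ)) := by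
  have ha_mono : StrictMono a := fun i j => hmono i j
  set c : Fin m → ℝ := fun i => a i * l i / l0
  have hc (i : Fin m) : 0 < c i := div_pos (mul_pos (ha i) (hl i)) hl0
  have hF_eq (z : ℂ) : F z = secular (fun i => (a i : ℂ)) (fun i => (c i : ℂ)) z := by
    simp [hF, secular, c, div_div]
  choose b hab hba hb using exists_secular_eq_zero_in_gap ha_mono hc
  have hbF (j : Fin m) : F (b j) = 0 := by
    rw [hF_eq, ← Complex.ofReal_zero, ← hb j]
    simp [secular]
  refine ⟨b, hab, hba, hbF, fun lam hlam hlam0 => ?_⟩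
  by_contra hne
  push Not at hne
  have hb_inj : Injective fun j => (b j : ℂ) :=
    Complex.ofReal_injective.comp (strictMono_of_interlace ha_mono.monotone hab hba).injective
  have hcard := card_le_of_secular_eq_zero (fun i => (a i : ℂ)) (fun i => (c i : ℂ))
    (s := insert lam (univ.image fun j => (b j : ℂ))) <| by
      simp only [mem_insert, mem_image, mem_univ, true_and]
      rintro z (rfl | ⟨j, rfl⟩)
      · exact ⟨hlam, (hF_eq z).symm.trans hlam0⟩
      · exact ⟨fun i h => ha_mono.apply_ne_of_mem_gap (hab j) (hba j) i
          (Complex.ofReal_injective h).symm, (hF_eq _).symm.trans (hbF j)⟩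
  rw [card_insert_of_notMem (by simpa using fun j => (hne j).symm),
    card_image_of_injective _ hb_inj, card_univ, Fintype.card_fin] at hcard
  omega

/-- For positive, ascending numbers `a 0 < a 1 < ... < a (m-1)`, the equation
`F(λ) = 0`, where `F(λ) = 1 + ∑ i, a i * l i / (l0 * (a i - λ))`, has exactly `m` roots in `ℂ`;
they are real and interlace with the `a j`. -/
theorem gaps_interlacing_roots
    (m : ℕ) (hm : 1 ≤ m)
    (l0 : ℝ) (hl0 : 0 < l0)
    (l a : Fin m → ℝ) (hl : ∀ i, 0 < l i) (ha : ∀ i, 0 < a i)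
    (hmono : ∀ i j : Fin m, i < j → a i < a j)
    (F : ℂ → ℂ)
    (hF : ∀ lam : ℂ, F lam = 1 + ∑ i : Fin m,
      ((a i : ℂ) * (l i : ℂ)) / ((l0 : ℂ) * ((a i : ℂ) - lam))) :
    ∃ b : Fin m → ℝ,
      (∀ j : Fin m, a j < b j) ∧
      (∀ j : Fin m, ∀ h : j.1 + 1 < m, b j < a ⟨j.1 + 1, h⟩) ∧
      (∀ j : Fin m, F ((b j : ℂ)) = 0) ∧
      (∀ lam : ℂ, (∀ i : Fin m, lam ≠ (a i : ℂ)) → F lam = 0 →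
        ∃ j : Fin m, lam = (b j : ℂ)) :=
  gaps_interlacing_roots_general m l0 hl0 l a hl ha hmono F hF
end

section
/- Let S be a subset of {1, ..., m}. Then the principal minor of A over the index set {0} ∪ S (i.e. the determinant of the submatrix of A obtained by keeping the rows and columns with indices in {0} ∪ S) equals (l_0^{-1} Σ_{j ∈ {1,...,m} \ S} q_j N_j) · Π_{s ∈ S} (q_s N_s l_s^{-1}). -/
/-! Each row `s ≥ 1` of `A` is supported on `{0, s}` and sums to zero, so the same holds in the
principal submatrix over `{0} ∪ S`. Adding all columns to column `0` leaves the determinant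
unchanged and turns column `0` into `(r, 0, …, 0)`, where
`r = A₀₀ + ∑_{s ∈ S} A₀ₛ = l₀⁻¹ ∑_{j ∉ S} q_j N_j` is the sum of row `0`. Expanding along that
column leaves the diagonal block `diag (l_s⁻¹ q_s N_s)_{s ∈ S}`. -/

open Matrix

theorem Matrix.det_eq_det_toBlocks₁₁_mul_sum_of_sum_eq_zero {ι R : Type*} [Fintype ι]
    [DecidableEq ι] [CommRing R] (M : Matrix (ι ⊕ Unit) (ι ⊕ Unit) R)
    (hM : ∀ i, ∑ j, M (.inl i) j = 0) :
    M.det = M.toBlocks₁₁.det * ∑ j, M (.inr ()) j := by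
  have hcol : (M.updateCol (.inr ()) fun k ↦ ∑ j, M k j).det = M.det := by
    simpa using M.det_updateCol_sum (.inr ()) 1
  have hblocks : M.updateCol (.inr ()) (fun k ↦ ∑ j, M k j) =
      fromBlocks M.toBlocks₁₁ 0 M.toBlocks₂₁ (of fun _ _ ↦ ∑ j, M (.inr ()) j) := by
    simp only [Fintype.sum_sum_type, Fintype.sum_unique] at hM
    ext (i | i) (j | j) <;> simp [toBlocks₁₁, toBlocks₂₁, hM]
  rw [← hcol, hblocks, det_fromBlocks_zero₁₂, det_unique (of _)]
  rfl

theorem Matrix.det_submatrix_sumElim_of_sum_eq_zero {ι n R : Type*} [Fintype ι] [DecidableEq ι]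
    [CommRing R] (A : Matrix n n R) (f : ι → n) (i₀ : n)
    (hA : ∀ i, ∑ j, A (f i) (f j) + A (f i) i₀ = 0) :
    (A.submatrix (Sum.elim f fun _ : Unit ↦ i₀) (Sum.elim f fun _ ↦ i₀)).det =
      (A.submatrix f f).det * (∑ j, A i₀ (f j) + A i₀ i₀) := by
  rw [det_eq_det_toBlocks₁₁_mul_sum_of_sum_eq_zero _ (by simpa [Fintype.sum_sum_type] using hA)]
  congr 1
  simp [Fintype.sum_sum_type]

def Fin.sumUnitEquivInsertZero {m : ℕ} (S : Finset (Fin m)) :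
    S ⊕ Unit ≃ {x // x ∈ insert 0 (S.map ⟨Fin.succ, Fin.succ_injective m⟩)} where
  toFun := Sum.elim (fun s ↦ ⟨s.1.succ, by simp⟩) fun _ ↦ ⟨0, by simp⟩
  invFun x := if h : x.1 = 0 then .inr () else .inl ⟨x.1.pred h, by
    obtain ⟨x, hx⟩ := x
    obtain ⟨s, hs, rfl⟩ : ∃ s ∈ S, s.succ = x := by simpa [h] using hx
    simpa using hs⟩
  left_inv := by rintro (s | _) <;> simp
  right_inv := by
    rintro ⟨x, hx⟩
    by_cases h : x = 0 <;> simp [h]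

theorem principal_minor_with_zero_general
    (m : ℕ)
    (l : Fin (m + 1) → ℝ)
    (q : Fin m → ℝ)
    (N : Fin m → ℕ)
    (A : Matrix (Fin (m + 1)) (Fin (m + 1)) ℝ)
    (hA00 : A 0 0 = (l 0)⁻¹ * ∑ j : Fin m, q j * (N j : ℝ))
    (hA0j : ∀ j : Fin m, A 0 j.succ = -(l 0)⁻¹ * (q j * (N j : ℝ)))
    (hAj0 : ∀ j : Fin m, A j.succ 0 = -(l j.succ)⁻¹ * (q j * (N j : ℝ)))
    (hAjj : ∀ j : Fin m, A j.succ j.succ = (l j.succ)⁻¹ * (q j * (N j : ℝ)))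
    (hAjk : ∀ j k : Fin m, j ≠ k → A j.succ k.succ = 0)
    (S : Finset (Fin m))
    (T : Finset (Fin (m + 1)))
    (hT : T = insert 0 (S.map ⟨Fin.succ, Fin.succ_injective m⟩)) :
    Matrix.det (A.submatrix
        (fun i : {x : Fin (m + 1) // x ∈ T} => (i : Fin (m + 1)))
        (fun j : {x : Fin (m + 1) // x ∈ T} => (j : Fin (m + 1))))
      = ((l 0)⁻¹ * ∑ j ∈ Sᶜ, q j * (N j : ℝ)) * ∏ s ∈ S, q s * (N s : ℝ) * (l s.succ)⁻¹ := by
  subst hT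
  set e := Fin.sumUnitEquivInsertZero S
  have he : Subtype.val ∘ e = Sum.elim (fun s : S ↦ s.1.succ) fun _ ↦ 0 := by
    ext (_ | _) <;> rfl
  have hdiag : A.submatrix (fun s : S ↦ s.1.succ) (fun s : S ↦ s.1.succ) =
      diagonal fun s : S ↦ (l s.1.succ)⁻¹ * (q s * N s) := by
    ext s t
    rcases eq_or_ne s t with rfl | hst
    · simp [hAjj]
    · simp [diagonal_apply_ne _ hst, hAjk _ _ (Subtype.coe_ne_coe.mpr hst)]
  have hrow₀ : ∑ j : S, A 0 j.1.succ + A 0 0 = (l 0)⁻¹ * ∑ j ∈ Sᶜ, q j * N j := by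
    rw [Finset.sum_coe_sort S fun j ↦ A 0 j.succ, hA00, ← Finset.sum_compl_add_sum S]
    simp only [hA0j, ← Finset.mul_sum]
    ring
  rw [← det_submatrix_equiv_self e, submatrix_submatrix, he,
    det_submatrix_sumElim_of_sum_eq_zero, hdiag, det_diagonal, hrow₀,
    Finset.prod_coe_sort S fun s ↦ (l s.succ)⁻¹ * (q s * N s), mul_comm]
  · exact congrArg _ (Finset.prod_congr rfl fun s _ ↦ mul_comm _ _)
  · intro s
    rw [Fintype.sum_eq_single s fun t hts ↦ hAjk _ _ (Subtype.coe_ne_coe.mpr hts.symm), hAjj, hAj0]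
    ring

/-- For `S ⊆ {1, ..., m}` the principal minor of `A` over the index set
`{0} ∪ S` equals `(l 0)⁻¹ (∑_{j ∉ S} q j N j) · ∏_{s ∈ S} q s N s (l s)⁻¹`. -/
theorem principal_minor_with_zero
    (m : ℕ) (hm : 1 ≤ m)
    (l : Fin (m + 1) → ℝ) (hl : ∀ i, 0 < l i)
    (q : Fin m → ℝ) (hq : ∀ j, 0 < q j)
    (N : Fin m → ℕ) (hN : ∀ j, 0 < N j)
    (A : Matrix (Fin (m + 1)) (Fin (m + 1)) ℝ)
    (hA00 : A 0 0 = (l 0)⁻¹ * ∑ j : Fin m, q j * (N j : ℝ))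
    (hA0j : ∀ j : Fin m, A 0 j.succ = -(l 0)⁻¹ * (q j * (N j : ℝ)))
    (hAj0 : ∀ j : Fin m, A j.succ 0 = -(l j.succ)⁻¹ * (q j * (N j : ℝ)))
    (hAjj : ∀ j : Fin m, A j.succ j.succ = (l j.succ)⁻¹ * (q j * (N j : ℝ)))
    (hAjk : ∀ j k : Fin m, j ≠ k → A j.succ k.succ = 0)
    (S : Finset (Fin m))
    (T : Finset (Fin (m + 1)))
    (hT : T = insert 0 (S.map ⟨Fin.succ, Fin.succ_injective m⟩)) :
    Matrix.det (A.submatrix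
        (fun i : {x : Fin (m + 1) // x ∈ T} => (i : Fin (m + 1)))
        (fun j : {x : Fin (m + 1) // x ∈ T} => (j : Fin (m + 1))))
      = ((l 0)⁻¹ * ∑ j ∈ Sᶜ, q j * (N j : ℝ)) * ∏ s ∈ S, q s * (N s : ℝ) * (l s.succ)⁻¹ :=
  principal_minor_with_zero_general m l q N A hA00 hA0j hAj0 hAjj hAjk S T hT
end

section
/- For every k with 1 ≤ k ≤ m, the k-th elementary symmetric function of the eigenvalues of A, E_k := Σ_{T ⊆ {0,1,...,m}, |T| = k} det(A_T) (the sum of all k×k principal minors of A, where A_T denotes the submatrix of A with rows and columns indexed by T), satisfies E_k = Σ_{S ⊆ {1,...,m}, |S| = k} (Π_{s ∈ S} a_s) · (1 + l_0^{-1} Σ_{s ∈ S} l_s), where a_j := N_j q_j / l_j. -/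
/-!
Row `j + 1` of `A` is supported on columns `0` and `j + 1` and sums to zero. Hence a principal
minor avoiding `0` is the diagonal product `∏_{s ∈ S} a s`, while in a principal minor on
`{0} ∪ (S + 1)` adding all columns to column `0` leaves an upper triangular matrix whose corner
entry is `l 0⁻¹ ∑_{j ∉ S} q j N j = l 0⁻¹ ∑_{j ∉ S} a j l (j + 1)`. Summing over `S` of size
`k - 1`, each pair `(S, j)` with `j ∉ S` is the pair `(S ∪ {j}, j)`, which turns these minors
into `l 0⁻¹ ∑_{|S| = k} (∏_{s ∈ S} a s) ∑_{s ∈ S} l (s + 1)`.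
-/

open Matrix Finset

namespace Matrix

variable {ι R : Type*} [CommRing R] [DecidableEq ι]

def principalMinor (M : Matrix ι ι R) (T : Finset ι) : R :=
  (M.submatrix (Subtype.val : T → ι) Subtype.val).det

variable [LinearOrder ι]

theorem principalMinor_eq_prod_of_upperTriangular {M : Matrix ι ι R} {T : Finset ι}
    (h : ∀ i ∈ T, ∀ j ∈ T, j < i → M i j = 0) :
    M.principalMinor T = ∏ i ∈ T, M i i := by
  have htri : (M.submatrix (Subtype.val : T → ι) Subtype.val).IsUpperTriangular :=
    fun i j hji => h i i.2 j j.2 hji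
  rw [principalMinor, det_of_isUpperTriangular htri]
  exact prod_coe_sort T fun i => M i i

/-- Adding all columns of the minor to column `j₀` makes it upper triangular. -/
theorem principalMinor_eq_rowSum_mul_prod_erase {M : Matrix ι ι R} {T : Finset ι} {j₀ : ι}
    (hj₀ : j₀ ∈ T) (hsum : ∀ i ∈ T, i ≠ j₀ → ∑ k ∈ T, M i k = 0)
    (htri : ∀ i ∈ T, ∀ j ∈ T, j < i → j ≠ j₀ → M i j = 0) :
    M.principalMinor T = (∑ k ∈ T, M j₀ k) * ∏ i ∈ T.erase j₀, M i i := by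
  set M' := M.updateCol j₀ fun i => ∑ k ∈ T, M i k
  have hcol : M.principalMinor T = M'.principalMinor T := by
    have := det_updateCol_sum (M.submatrix (Subtype.val : T → ι) Subtype.val) ⟨j₀, hj₀⟩ 1
    simp only [Pi.one_apply, one_smul] at this
    rw [principalMinor, principalMinor, ← this]
    congr 1
    ext i j
    by_cases hj : j = ⟨j₀, hj₀⟩
    · subst hj
      simp [M', sum_attach T (M i)]
    · simp [M', updateCol_ne hj, updateCol_ne (fun h => hj (Subtype.ext h))]
  rw [hcol, principalMinor_eq_prod_of_upperTriangular, ← mul_prod_erase T _ hj₀]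
  · congr 1
    · simp [M']
    · refine prod_congr rfl fun i hi => ?_
      simp [M', updateCol_ne (ne_of_mem_erase hi)]
  · intro i hi j hj hji
    by_cases hj' : j = j₀
    · subst hj'
      simpa [M'] using hsum i hi hji.ne'
    · simpa [M', updateCol_ne hj'] using htri i hi j hj hji hj'

section Star

variable {n : ℕ} {M : Matrix (Fin (n + 1)) (Fin (n + 1)) R}
  (hM : ∀ i j : Fin n, i ≠ j → M i.succ j.succ = 0)
include hM

theorem principalMinor_map_succEmb (S : Finset (Fin n)) :
    M.principalMinor (S.map (Fin.succEmb n)) = ∏ s ∈ S, M s.succ s.succ := by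
  rw [principalMinor_eq_prod_of_upperTriangular, prod_map]
  · rfl
  · simp only [mem_map, Fin.coe_succEmb]
    rintro _ ⟨s, -, rfl⟩ _ ⟨t, -, rfl⟩ hts
    exact hM s t (Fin.succ_lt_succ_iff.mp hts).ne'

theorem principalMinor_insert_zero_map_succEmb (S : Finset (Fin n))
    (hrow : ∀ s ∈ S, M s.succ 0 + M s.succ s.succ = 0) :
    M.principalMinor (insert 0 (S.map (Fin.succEmb n))) =
      (M 0 0 + ∑ s ∈ S, M 0 s.succ) * ∏ s ∈ S, M s.succ s.succ := by
  have h0 : (0 : Fin (n + 1)) ∉ S.map (Fin.succEmb n) := by simp [Fin.succ_ne_zero]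
  have hrowSum (i : Fin (n + 1)) :
      ∑ k ∈ insert 0 (S.map (Fin.succEmb n)), M i k = M i 0 + ∑ s ∈ S, M i s.succ := by
    rw [sum_insert h0, sum_map]; rfl
  rw [principalMinor_eq_rowSum_mul_prod_erase (mem_insert_self 0 _), hrowSum, erase_insert h0,
    prod_map]
  · rfl
  · simp only [mem_insert, mem_map, Fin.coe_succEmb]
    rintro _ (h | ⟨s, hs, rfl⟩) hs0
    · exact absurd h hs0
    · rw [hrowSum, sum_eq_single s (fun t _ hts => hM s t hts.symm) (absurd hs)]
      exact hrow s hs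
  · simp only [mem_insert, mem_map, Fin.coe_succEmb]
    rintro _ (rfl | ⟨s, -, rfl⟩) _ (rfl | ⟨t, -, rfl⟩) hts ht0
    · exact absurd rfl ht0
    · simp at hts
    · exact absurd rfl ht0
    · exact hM s t (Fin.succ_lt_succ_iff.mp hts).ne'

end Star

end Matrix

theorem Fin.sum_powersetCard_succ_univ {M : Type*} [AddCommMonoid M] {n : ℕ} (k : ℕ)
    (f : Finset (Fin (n + 1)) → M) :
    ∑ T ∈ powersetCard (k + 1) univ, f T =
      ∑ S ∈ powersetCard (k + 1) univ, f (S.map (Fin.succEmb n)) +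
        ∑ S ∈ powersetCard k univ, f (insert 0 (S.map (Fin.succEmb n))) := by
  have h0 : (0 : Fin (n + 1)) ∉ (univ : Finset (Fin n)).map (Fin.succEmb n) := by
    simp [Fin.succ_ne_zero]
  have hU : (univ : Finset (Fin (n + 1))) = insert 0 (univ.map (Fin.succEmb n)) := by
    rw [Fin.univ_succ, cons_eq_insert]; rfl
  rw [hU, powersetCard_succ_insert h0, sum_union, sum_image, powersetCard_map, sum_map,
    powersetCard_map, sum_map]
  · rfl
  · intro S hS T hT hST
    simp only [mem_coe, mem_powersetCard] at hS hT
    rw [← erase_insert (notMem_mono hS.1 h0), hST, erase_insert (notMem_mono hT.1 h0)]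
  · rw [disjoint_left]
    simp only [mem_powersetCard, mem_image]
    rintro _ ⟨hsub, -⟩ ⟨S, -, rfl⟩
    exact h0 (hsub (mem_insert_self 0 S))

theorem Finset.sum_powersetCard_prod_mul_sum_compl {ι R : Type*} [Fintype ι] [DecidableEq ι]
    [CommSemiring R] (g w : ι → R) (k : ℕ) :
    ∑ S ∈ powersetCard k univ, (∏ s ∈ S, g s) * ∑ j ∈ Sᶜ, g j * w j =
      ∑ S ∈ powersetCard (k + 1) univ, (∏ s ∈ S, g s) * ∑ j ∈ S, w j := by
  simp_rw [mul_sum]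
  rw [sum_sigma', sum_sigma']
  refine sum_nbij' (fun x => ⟨insert x.2 x.1, x.2⟩) (fun x => ⟨x.1.erase x.2, x.2⟩)
    ?_ ?_ ?_ ?_ ?_ <;>
  rintro ⟨S, j⟩ hSj <;>
  simp only [mem_sigma, mem_powersetCard_univ, mem_compl] at hSj
  · simp [card_insert_of_notMem hSj.2, hSj.1]
  · simp [card_erase_of_mem hSj.2, hSj.1]
  · simp [erase_insert hSj.2]
  · simp [insert_erase hSj.2]
  · dsimp only
    rw [prod_insert hSj.2]
    ring

theorem elementary_symmetric_of_eigenvalues_general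
    (m : ℕ)
    (l : Fin (m + 1) → ℝ) (hl : ∀ i, 0 < l i)
    (q : Fin m → ℝ)
    (N : Fin m → ℕ)
    (a : Fin m → ℝ) (ha : ∀ j, a j = (N j : ℝ) * q j / l j.succ)
    (A : Matrix (Fin (m + 1)) (Fin (m + 1)) ℝ)
    (hA00 : A 0 0 = (l 0)⁻¹ * ∑ j : Fin m, q j * (N j : ℝ))
    (hA0j : ∀ j : Fin m, A 0 j.succ = -(l 0)⁻¹ * (q j * (N j : ℝ)))
    (hAj0 : ∀ j : Fin m, A j.succ 0 = -(l j.succ)⁻¹ * (q j * (N j : ℝ)))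
    (hAjj : ∀ j : Fin m, A j.succ j.succ = (l j.succ)⁻¹ * (q j * (N j : ℝ)))
    (hAjk : ∀ j k : Fin m, j ≠ k → A j.succ k.succ = 0)
    (k : ℕ) :
    ∑ T ∈ Finset.powersetCard k (Finset.univ : Finset (Fin (m + 1))),
        Matrix.det (A.submatrix
          (fun i : {x : Fin (m + 1) // x ∈ T} => (i : Fin (m + 1)))
          (fun j : {x : Fin (m + 1) // x ∈ T} => (j : Fin (m + 1))))
      = ∑ S ∈ Finset.powersetCard k (Finset.univ : Finset (Fin m)),
          ((∏ s ∈ S, a s) * (1 + (l 0)⁻¹ * ∑ s ∈ S, l s.succ)) := by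
  have hdiag (j : Fin m) : A j.succ j.succ = a j := by rw [hAjj, ha]; ring
  have hrow (j : Fin m) : A j.succ 0 + A j.succ j.succ = 0 := by rw [hAj0, hAjj]; ring
  have hweight (j : Fin m) : q j * N j = a j * l j.succ := by
    rw [ha]; field_simp [(hl j.succ).ne']
  have htop (S : Finset (Fin m)) :
      A 0 0 + ∑ s ∈ S, A 0 s.succ = (l 0)⁻¹ * ∑ j ∈ Sᶜ, a j * l j.succ := by
    rw [hA00, ← sum_compl_add_sum S]
    simp only [hA0j, hweight, neg_mul, sum_neg_distrib, ← mul_sum]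
    ring
  change ∑ T ∈ powersetCard k univ, A.principalMinor T = _
  cases k with
  | zero => simp [principalMinor]
  | succ k =>
    rw [Fin.sum_powersetCard_succ_univ]
    have hminor₁ (S : Finset (Fin m)) :
        A.principalMinor (S.map (Fin.succEmb m)) = ∏ s ∈ S, a s := by
      rw [principalMinor_map_succEmb hAjk]
      simp only [hdiag]
    have hminor₂ (S : Finset (Fin m)) : A.principalMinor (insert 0 (S.map (Fin.succEmb m))) =
        (∏ s ∈ S, a s) * ((l 0)⁻¹ * ∑ j ∈ Sᶜ, a j * l j.succ) := by
      rw [principalMinor_insert_zero_map_succEmb hAjk S fun s _ => hrow s, htop, mul_comm]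
      simp only [hdiag]
    simp only [hminor₁, hminor₂, mul_add, mul_one, sum_add_distrib, mul_left_comm _ (l 0)⁻¹,
      ← mul_sum, sum_powersetCard_prod_mul_sum_compl]

/-- For `1 ≤ k ≤ m`, the sum `E_k` of all `k × k` principal minors of `A`
equals `∑_{S ⊆ {1,...,m}, |S| = k} (∏_{s ∈ S} a s) (1 + l 0⁻¹ ∑_{s ∈ S} l s)`, where
`a j = N j q j / l j`. -/
theorem elementary_symmetric_of_eigenvalues
    (m : ℕ) (hm : 1 ≤ m)
    (l : Fin (m + 1) → ℝ) (hl : ∀ i, 0 < l i)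
    (q : Fin m → ℝ) (hq : ∀ j, 0 < q j)
    (N : Fin m → ℕ) (hN : ∀ j, 0 < N j)
    (a : Fin m → ℝ) (ha : ∀ j, a j = (N j : ℝ) * q j / l j.succ)
    (A : Matrix (Fin (m + 1)) (Fin (m + 1)) ℝ)
    (hA00 : A 0 0 = (l 0)⁻¹ * ∑ j : Fin m, q j * (N j : ℝ))
    (hA0j : ∀ j : Fin m, A 0 j.succ = -(l 0)⁻¹ * (q j * (N j : ℝ)))
    (hAj0 : ∀ j : Fin m, A j.succ 0 = -(l j.succ)⁻¹ * (q j * (N j : ℝ)))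
    (hAjj : ∀ j : Fin m, A j.succ j.succ = (l j.succ)⁻¹ * (q j * (N j : ℝ)))
    (hAjk : ∀ j k : Fin m, j ≠ k → A j.succ k.succ = 0)
    (k : ℕ) (hk1 : 1 ≤ k) (hkm : k ≤ m) :
    ∑ T ∈ Finset.powersetCard k (Finset.univ : Finset (Fin (m + 1))),
        Matrix.det (A.submatrix
          (fun i : {x : Fin (m + 1) // x ∈ T} => (i : Fin (m + 1)))
          (fun j : {x : Fin (m + 1) // x ∈ T} => (j : Fin (m + 1))))
      = ∑ S ∈ Finset.powersetCard k (Finset.univ : Finset (Fin m)),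
          ((∏ s ∈ S, a s) * (1 + (l 0)⁻¹ * ∑ s ∈ S, l s.succ)) :=
  elementary_symmetric_of_eigenvalues_general m l hl q N a ha A hA00 hA0j hAj0 hAjj hAjk k
end

section
/- For every λ ∈ ℂ with λ ∉ {a_1, ..., a_m}, the characteristic determinant of A satisfies det(A − λ·I) = −λ · (Π_{j=1}^m (a_j − λ)) · F(λ), where a_j := N_j q_j / l_j and F(λ) := 1 + Σ_{i=1}^m a_i l_i / (l_0 (a_i − λ)). -/
/-!
`A - λ I` is an arrowhead matrix: off its first row and column it is diagonal with entries
`a j - λ`. Taking the Schur complement of this diagonal block gives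
`det (A - λ I) = ∏ j (a j - λ) * (A₀₀ - λ - ∑ j A₀ⱼ Aⱼ₀ / (a j - λ))`, and since
`q j * N j = a j * l (j + 1)`, each summand `A₀ⱼ Aⱼ₀ / (a j - λ)` differs from the matching part
of `A₀₀` by `-λ` times the matching term of `F λ`.
-/

open Matrix

def finOneSumEquiv (m : ℕ) : Fin 1 ⊕ Fin m ≃ Fin (m + 1) where
  toFun := Sum.elim (fun _ => 0) Fin.succ
  invFun := Fin.cases (Sum.inl 0) Sum.inr
  left_inv := by rintro (⟨_, _⟩ | j) <;> simp [Fin.fin_one_eq_zero]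
  right_inv := by refine Fin.cases ?_ ?_ <;> simp

@[simp] theorem finOneSumEquiv_inl (m : ℕ) (i : Fin 1) : finOneSumEquiv m (.inl i) = 0 := rfl
@[simp] theorem finOneSumEquiv_inr (m : ℕ) (j : Fin m) : finOneSumEquiv m (.inr j) = j.succ := rfl

theorem Matrix.det_arrowhead {K : Type*} [Field K] {m : ℕ}
    (M : Matrix (Fin (m + 1)) (Fin (m + 1)) K)
    (hoff : ∀ i j : Fin m, i ≠ j → M i.succ j.succ = 0) (hdiag : ∀ j : Fin m, M j.succ j.succ ≠ 0) :
    M.det = (∏ j : Fin m, M j.succ j.succ) *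
      (M 0 0 - ∑ j : Fin m, M 0 j.succ * M j.succ 0 / M j.succ j.succ) := by
  let d : Fin m → K := fun j => M j.succ j.succ
  have hblocks : M.submatrix (finOneSumEquiv m) (finOneSumEquiv m) =
      fromBlocks (of fun _ _ => M 0 0) (of fun _ j => M 0 j.succ) (of fun i _ => M i.succ 0)
        (diagonal d) := by
    ext (i | i) (j | j)
    · simp [Fin.fin_one_eq_zero]
    · simp [Fin.fin_one_eq_zero]
    · simp [Fin.fin_one_eq_zero]
    · by_cases hij : i = j
      · simp [hij, d]
      · simp [hij, hoff i j hij]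
  let : Invertible d := ⟨fun j => (d j)⁻¹, funext fun j => inv_mul_cancel₀ (hdiag j),
    funext fun j => mul_inv_cancel₀ (hdiag j)⟩
  let := diagonalInvertible d
  rw [← det_submatrix_equiv_self (finOneSumEquiv m), hblocks, det_fromBlocks₂₂, invOf_diagonal_eq,
    det_diagonal, det_fin_one]
  simp only [sub_apply, mul_apply, diagonal_apply, of_apply, mul_ite, mul_zero, Finset.sum_ite_eq',
    Finset.mem_univ, if_true]
  congr 2
  refine Finset.sum_congr rfl fun j _ => ?_
  rw [mul_right_comm, div_eq_mul_inv]
  rfl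

theorem Finset.sum_sub_sub_sum_mul_div_sub {K ι : Type*} [Field K] (s : Finset ι) (c a : ι → K)
    (lam : K) (h : ∀ i ∈ s, a i ≠ lam) :
    ∑ i ∈ s, c i - lam - ∑ i ∈ s, c i * a i / (a i - lam) =
      -lam * (1 + ∑ i ∈ s, c i / (a i - lam)) := by
  have hterm : ∀ i ∈ s, c i - c i * a i / (a i - lam) = -lam * (c i / (a i - lam)) := by
    intro i hi
    field_simp [sub_ne_zero.2 (h i hi)]
    ring
  rw [mul_add, mul_one, mul_sum, ← sum_congr rfl hterm, sum_sub_distrib]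
  ring

theorem char_det_formula_general
    (m : ℕ)
    (l : Fin (m + 1) → ℝ) (hl : ∀ i, 0 < l i)
    (q : Fin m → ℝ)
    (N : Fin m → ℕ)
    (a : Fin m → ℝ) (ha : ∀ j, a j = (N j : ℝ) * q j / l j.succ)
    (F : ℂ → ℂ)
    (hF : ∀ lam : ℂ, F lam = 1 + ∑ i : Fin m,
      ((a i : ℂ) * (l i.succ : ℂ)) / ((l 0 : ℂ) * ((a i : ℂ) - lam)))
    (A : Matrix (Fin (m + 1)) (Fin (m + 1)) ℝ)
    (hA00 : A 0 0 = (l 0)⁻¹ * ∑ j : Fin m, q j * (N j : ℝ))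
    (hA0j : ∀ j : Fin m, A 0 j.succ = -(l 0)⁻¹ * (q j * (N j : ℝ)))
    (hAj0 : ∀ j : Fin m, A j.succ 0 = -(l j.succ)⁻¹ * (q j * (N j : ℝ)))
    (hAjj : ∀ j : Fin m, A j.succ j.succ = (l j.succ)⁻¹ * (q j * (N j : ℝ)))
    (hAjk : ∀ j k : Fin m, j ≠ k → A j.succ k.succ = 0)
    (lam : ℂ) (hlam : ∀ i : Fin m, lam ≠ (a i : ℂ)) :
    Matrix.det ((A.map Complex.ofReal) - lam • 1)
      = -lam * (∏ j : Fin m, ((a j : ℂ) - lam)) * F lam := by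
  have hqN : ∀ j, q j * N j = a j * l j.succ := fun j => by
    rw [ha j]; field_simp [(hl j.succ).ne']
  have hl' : ∀ i, (l i : ℂ) ≠ 0 := fun i => Complex.ofReal_ne_zero.2 (hl i).ne'
  set M := A.map Complex.ofReal - lam • 1
  set c : Fin m → ℂ := fun j => a j * l j.succ / l 0
  have hM00 : M 0 0 = ∑ j, c j - lam := by
    simp [M, c, hA00, hqN, Finset.mul_sum, div_eq_inv_mul]
  have hcross : ∀ j, M 0 j.succ * M j.succ 0 = c j * a j := fun j => by
    simp [M, c, hA0j, hAj0, hqN, (Fin.succ_ne_zero j).symm]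
    field_simp
  have hMjj : ∀ j, M j.succ j.succ = a j - lam := fun j => by
    simp [M, hAjj, hqN, inv_mul_eq_div, mul_div_cancel_right₀ _ (hl' _)]
  have hMjk : ∀ j k : Fin m, j ≠ k → M j.succ k.succ = 0 := fun j k hjk => by
    simp [M, hAjk j k hjk, hjk]
  have hFc : F lam = 1 + ∑ j, c j / (a j - lam) := by
    simp only [hF, c, div_div]
  have hne : ∀ j ∈ Finset.univ, (a j : ℂ) ≠ lam := fun j _ => (hlam j).symm
  rw [det_arrowhead M hMjk fun j => hMjj j ▸ sub_ne_zero.2 (hne j (Finset.mem_univ j)),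
    Finset.sum_congr rfl fun j _ => by rw [hcross, hMjj], hM00, hFc,
    Finset.sum_sub_sub_sum_mul_div_sub _ _ _ _ hne, Finset.prod_congr rfl fun j _ => hMjj j]
  ring

/-- For `λ ∉ {a 1, ..., a m}` one has
`det(A - λ·I) = -λ · (∏ j (a j - λ)) · F(λ)`. -/
theorem char_det_formula
    (m : ℕ) (hm : 1 ≤ m)
    (l : Fin (m + 1) → ℝ) (hl : ∀ i, 0 < l i)
    (q : Fin m → ℝ) (hq : ∀ j, 0 < q j)
    (N : Fin m → ℕ) (hN : ∀ j, 0 < N j)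
    (a : Fin m → ℝ) (ha : ∀ j, a j = (N j : ℝ) * q j / l j.succ)
    (F : ℂ → ℂ)
    (hF : ∀ lam : ℂ, F lam = 1 + ∑ i : Fin m,
      ((a i : ℂ) * (l i.succ : ℂ)) / ((l 0 : ℂ) * ((a i : ℂ) - lam)))
    (A : Matrix (Fin (m + 1)) (Fin (m + 1)) ℝ)
    (hA00 : A 0 0 = (l 0)⁻¹ * ∑ j : Fin m, q j * (N j : ℝ))
    (hA0j : ∀ j : Fin m, A 0 j.succ = -(l 0)⁻¹ * (q j * (N j : ℝ)))
    (hAj0 : ∀ j : Fin m, A j.succ 0 = -(l j.succ)⁻¹ * (q j * (N j : ℝ)))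
    (hAjj : ∀ j : Fin m, A j.succ j.succ = (l j.succ)⁻¹ * (q j * (N j : ℝ)))
    (hAjk : ∀ j k : Fin m, j ≠ k → A j.succ k.succ = 0)
    (lam : ℂ) (hlam : ∀ i : Fin m, lam ≠ (a i : ℂ)) :
    Matrix.det ((A.map Complex.ofReal) - lam • 1)
      = -lam * (∏ j : Fin m, ((a j : ℂ) - lam)) * F lam :=
  char_det_formula_general m l hl q N a ha F hF A hA00 hA0j hAj0 hAjj hAjk lam hlam
end

section
/- Assume that the numbers a_j := N_j q_j / l_j are pairwise distinct. Then a complex number λ is an eigenvalue of A (i.e. det(A − λ·I) = 0) if and only if either λ = 0, or λ ∉ {a_1, ..., a_m} and F(λ) = 0, where F(λ) := 1 + Σ_{i=1}^m a_i l_i / (l_0 (a_i − λ)). In particular, no a_j is an eigenvalue of A. -/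
/-!
`A - λ` is an arrowhead matrix: besides its diagonal, only its first row and first column are
nonzero. If no diagonal entry `a_j - λ` vanishes, a kernel vector `x` is determined by `x₀`
through `x_j = a_j x₀ / (a_j - λ)`, and the first row then says `x₀ · (-λ F(λ)) = 0`.
If `λ = a_k`, row `k` forces `x₀ = 0`, the other rows `x_j = 0` for `j ≠ k` (the `a_j` are
distinct), and the first row `x_k = 0`; so `A - a_k` is invertible.
-/

open Matrix

namespace Matrix

variable {m : ℕ} {R : Type*}

/-- Corner `d₀`, first row `u`, first column `v`, diagonal `d`, zero elsewhere. -/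
def arrowhead [Zero R] (d₀ : R) (u v d : Fin m → R) : Matrix (Fin (m + 1)) (Fin (m + 1)) R :=
  of (Fin.cons (Fin.cons d₀ u) fun i => Fin.cons (v i) fun j => if i = j then d i else 0)

section Entries

variable [Zero R] (d₀ : R) (u v d : Fin m → R)

@[simp]
theorem arrowhead_zero_zero : arrowhead d₀ u v d 0 0 = d₀ := rfl

@[simp]
theorem arrowhead_zero_succ (j : Fin m) : arrowhead d₀ u v d 0 j.succ = u j := rfl

@[simp]
theorem arrowhead_succ_zero (i : Fin m) : arrowhead d₀ u v d i.succ 0 = v i := rfl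

@[simp]
theorem arrowhead_succ_succ_self (i : Fin m) : arrowhead d₀ u v d i.succ i.succ = d i :=
  if_pos rfl

theorem arrowhead_succ_succ_of_ne {i j : Fin m} (h : i ≠ j) :
    arrowhead d₀ u v d i.succ j.succ = 0 :=
  if_neg h

end Entries

theorem arrowhead_sub_smul_one [Ring R] (d₀ : R) (u v d : Fin m → R) (r : R) :
    arrowhead d₀ u v d - r • 1 = arrowhead (d₀ - r) u v fun i => d i - r := by
  ext i j
  induction i using Fin.cases with
  | zero => induction j using Fin.cases <;> simp [(Fin.succ_ne_zero _).symm]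
  | succ i =>
    induction j using Fin.cases with
    | zero => simp
    | succ j =>
      obtain rfl | hij := eq_or_ne i j
      · simp
      · simp [arrowhead_succ_succ_of_ne _ _ _ _ hij,
          one_apply_ne (Fin.succ_injective _ |>.ne hij)]

theorem eq_arrowhead [Zero R] (M : Matrix (Fin (m + 1)) (Fin (m + 1)) R)
    (hM : ∀ i j : Fin m, i ≠ j → M i.succ j.succ = 0) :
    M = arrowhead (M 0 0) (fun j => M 0 j.succ) (fun i => M i.succ 0)
      fun i => M i.succ i.succ := by
  ext i j
  induction i using Fin.cases <;> induction j using Fin.cases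
  case succ.succ i j =>
    obtain rfl | hij := eq_or_ne i j
    · rw [arrowhead_succ_succ_self]
    · rw [hM i j hij, arrowhead_succ_succ_of_ne _ _ _ _ hij]
  all_goals rfl

theorem arrowhead_mulVec_eq_zero_iff [NonUnitalNonAssocSemiring R] (d₀ : R) (u v d : Fin m → R)
    (x : Fin (m + 1) → R) :
    arrowhead d₀ u v d *ᵥ x = 0 ↔ d₀ * x 0 + ∑ j, u j * x j.succ = 0 ∧
      ∀ j, v j * x 0 + d j * x j.succ = 0 := by
  have hrow (i : Fin m) :
      ∑ j : Fin m, arrowhead d₀ u v d i.succ j.succ * x j.succ = d i * x i.succ := by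
    rw [Finset.sum_eq_single i
      (fun j _ hji => by rw [arrowhead_succ_succ_of_ne _ _ _ _ hji.symm, zero_mul])
      (fun hi => absurd (Finset.mem_univ i) hi), arrowhead_succ_succ_self]
  simp only [funext_iff, Fin.forall_fin_succ, mulVec, dotProduct, Fin.sum_univ_succ, hrow,
    arrowhead_zero_zero, arrowhead_zero_succ, arrowhead_succ_zero, Pi.zero_apply]

theorem det_arrowhead_ne_zero [CommRing R] [IsDomain R] {d₀ : R} {u v d : Fin m → R}
    {k : Fin m} (hk : d k = 0) (hd : ∀ j, j ≠ k → d j ≠ 0) (huk : u k ≠ 0)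
    (hvk : v k ≠ 0) :
    (arrowhead d₀ u v d).det ≠ 0 := by
  rw [Ne, ← exists_mulVec_eq_zero_iff]
  rintro ⟨x, hx, hker⟩
  obtain ⟨hrow0, hrows⟩ := (arrowhead_mulVec_eq_zero_iff d₀ u v d x).1 hker
  have hx0 : x 0 = 0 := by simpa [hk, hvk] using hrows k
  have hxj : ∀ j, j ≠ k → x j.succ = 0 := fun j hjk => by simpa [hx0, hd j hjk] using hrows j
  have hxk : x k.succ = 0 := by
    rw [hx0, mul_zero, zero_add, Finset.sum_eq_single k
      (fun j _ hjk => by rw [hxj j hjk, mul_zero]) (fun h => absurd (Finset.mem_univ k) h)] at hrow0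
    simpa [huk] using hrow0
  refine hx (funext (Fin.cases hx0 fun j => ?_))
  obtain rfl | hjk := eq_or_ne j k
  · exact hxk
  · exact hxj j hjk

theorem det_arrowhead_eq_zero_iff [Field R] (d₀ : R) (u v : Fin m → R) {d : Fin m → R}
    (hd : ∀ j, d j ≠ 0) : (arrowhead d₀ u v d).det = 0 ↔ d₀ = ∑ j, u j * v j / d j := by
  rw [← exists_mulVec_eq_zero_iff]
  constructor
  · rintro ⟨x, hx, hker⟩
    obtain ⟨hrow0, hrows⟩ := (arrowhead_mulVec_eq_zero_iff d₀ u v d x).1 hker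
    have hsolve : ∀ j, x j.succ = -(v j / d j) * x 0 := fun j => by
      field_simp [hd j]
      linear_combination hrows j
    have hx0 : x 0 ≠ 0 := fun h0 => hx (funext (Fin.cases h0 fun j => by simp [hsolve, h0]))
    have hsum : ∑ j, u j * x j.succ = -(∑ j, u j * v j / d j) * x 0 := by
      rw [neg_mul, Finset.sum_mul, ← Finset.sum_neg_distrib]
      exact Finset.sum_congr rfl fun j _ => by rw [hsolve]; ring
    rw [hsum] at hrow0
    exact sub_eq_zero.1 ((mul_eq_zero.1 (by linear_combination hrow0)).resolve_right hx0)
  · intro h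
    refine ⟨Fin.cons 1 fun j => -(v j / d j), fun hx => by simpa using congr_fun hx 0, ?_⟩
    rw [arrowhead_mulVec_eq_zero_iff]
    refine ⟨?_, fun j => ?_⟩
    · simp only [Fin.cons_zero, Fin.cons_succ, mul_one, mul_neg, Finset.sum_neg_distrib,
        mul_div_assoc', h, add_neg_cancel]
    · rw [Fin.cons_zero, Fin.cons_succ, mul_one, mul_neg, mul_div_cancel₀ _ (hd j),
        add_neg_cancel]

end Matrix

section ArrowheadSpectrum

open Function

variable {K : Type*} [Field K] {m : ℕ} {α c : Fin m → K}

theorem det_arrowhead_sub_smul_self_ne_zero (hα : Injective α) {k : Fin m} (hαk : α k ≠ 0)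
    (hck : c k ≠ 0) : (arrowhead (∑ j, c j) (-c) (-α) α - α k • 1).det ≠ 0 := by
  rw [arrowhead_sub_smul_one]
  exact det_arrowhead_ne_zero (sub_self _) (fun j hjk => sub_ne_zero.2 (hα.ne hjk))
    (neg_ne_zero.2 hck) (neg_ne_zero.2 hαk)

theorem det_arrowhead_sub_smul_eq_zero_iff_of_forall_ne {r : K} (hr : ∀ j, r ≠ α j) :
    (arrowhead (∑ j, c j) (-c) (-α) α - r • 1).det = 0 ↔
      r * (1 + ∑ j, c j / (α j - r)) = 0 := by
  have hpole : ∀ j, α j - r ≠ 0 := fun j => sub_ne_zero.2 (hr j).symm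
  have hterm : ∀ j, c j * α j / (α j - r) = c j + r * (c j / (α j - r)) := fun j => by
    field_simp [hpole j]
    ring
  rw [arrowhead_sub_smul_one, det_arrowhead_eq_zero_iff _ _ _ hpole]
  simp only [Pi.neg_apply, neg_mul_neg, hterm, Finset.sum_add_distrib, ← Finset.mul_sum]
  constructor <;> intro h <;> linear_combination -h

theorem det_arrowhead_sub_smul_eq_zero_iff (hα : Injective α) (hα0 : ∀ j, α j ≠ 0)
    (hc0 : ∀ j, c j ≠ 0) (r : K) :
    (arrowhead (∑ j, c j) (-c) (-α) α - r • 1).det = 0 ↔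
      r = 0 ∨ (∀ j, r ≠ α j) ∧ 1 + ∑ j, c j / (α j - r) = 0 := by
  by_cases hr : ∀ j, r ≠ α j
  · rw [det_arrowhead_sub_smul_eq_zero_iff_of_forall_ne hr, mul_eq_zero]
    simp [hr]
  · obtain ⟨k, rfl⟩ := not_forall_not.1 hr
    simp only [det_arrowhead_sub_smul_self_ne_zero hα (hα0 k) (hc0 k), false_iff, not_or]
    exact ⟨hα0 k, fun h => h.1 k rfl⟩

end ArrowheadSpectrum

theorem eigenvalues_iff_roots_general
    (m : ℕ)
    (l : Fin (m + 1) → ℝ) (hl : ∀ i, 0 < l i)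
    (q : Fin m → ℝ) (hq : ∀ j, 0 < q j)
    (N : Fin m → ℕ) (hN : ∀ j, 0 < N j)
    (a : Fin m → ℝ) (ha : ∀ j, a j = (N j : ℝ) * q j / l j.succ)
    (hdist : ∀ i j : Fin m, i ≠ j → a i ≠ a j)
    (F : ℂ → ℂ)
    (hF : ∀ lam : ℂ, F lam = 1 + ∑ i : Fin m,
      ((a i : ℂ) * (l i.succ : ℂ)) / ((l 0 : ℂ) * ((a i : ℂ) - lam)))
    (A : Matrix (Fin (m + 1)) (Fin (m + 1)) ℝ)
    (hA00 : A 0 0 = (l 0)⁻¹ * ∑ j : Fin m, q j * (N j : ℝ))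
    (hA0j : ∀ j : Fin m, A 0 j.succ = -(l 0)⁻¹ * (q j * (N j : ℝ)))
    (hAj0 : ∀ j : Fin m, A j.succ 0 = -(l j.succ)⁻¹ * (q j * (N j : ℝ)))
    (hAjj : ∀ j : Fin m, A j.succ j.succ = (l j.succ)⁻¹ * (q j * (N j : ℝ)))
    (hAjk : ∀ j k : Fin m, j ≠ k → A j.succ k.succ = 0) :
    (∀ lam : ℂ, Matrix.det ((A.map Complex.ofReal) - lam • 1) = 0 ↔
      (lam = 0 ∨ ((∀ i : Fin m, lam ≠ (a i : ℂ)) ∧ F lam = 0))) ∧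
    (∀ j : Fin m, Matrix.det ((A.map Complex.ofReal) - (a j : ℂ) • 1) ≠ 0) := by
  have hl' : ∀ i, (l i : ℂ) ≠ 0 := fun i => Complex.ofReal_ne_zero.2 (hl i).ne'
  have hqN : ∀ j, q j * N j = a j * l j.succ := fun j => by
    rw [ha, div_mul_cancel₀ _ (hl j.succ).ne', mul_comm]
  have ha0 : ∀ j, (a j : ℂ) ≠ 0 := fun j => by
    rw [ha j, Complex.ofReal_ne_zero]
    exact (div_pos (mul_pos (Nat.cast_pos.2 (hN j)) (hq j)) (hl j.succ)).ne'
  set α : Fin m → ℂ := fun j => a j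
  set c : Fin m → ℂ := fun j => a j * l j.succ / l 0
  have hc0 : ∀ j, c j ≠ 0 := fun j =>
    div_ne_zero (mul_ne_zero (ha0 j) (hl' j.succ)) (hl' 0)
  have hα : Function.Injective α := fun i j hij => by_contra fun hne =>
    hdist i j hne (Complex.ofReal_injective hij)
  have hA : A.map Complex.ofReal = arrowhead (∑ j, c j) (-c) (-α) α := by
    rw [eq_arrowhead (A.map Complex.ofReal) fun i j hij => by simp [hAjk i j hij]]
    congr 1
    · simp only [map_apply, hA00, hqN, c]
      push_cast
      rw [Finset.mul_sum]
      exact Finset.sum_congr rfl fun j _ => by field_simp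
    all_goals
      ext j
      simp only [map_apply, hA0j, hAj0, hAjj, hqN, c, α, Pi.neg_apply]
      push_cast
      field_simp [hl']
  have hFc : ∀ lam, F lam = 1 + ∑ j, c j / (α j - lam) := fun lam => by
    simp only [hF, c, α, div_div]
  refine ⟨fun lam => ?_, fun j => ?_⟩
  · rw [hA, det_arrowhead_sub_smul_eq_zero_iff hα ha0 hc0, hFc]
  · rw [hA]
    exact det_arrowhead_sub_smul_self_ne_zero hα (ha0 j) (hc0 j)

/-- If the `a j = N j q j / l j` are pairwise distinct, then `λ ∈ ℂ` is an
eigenvalue of `A` iff `λ = 0` or (`λ ∉ {a 1, ..., a m}` and `F(λ) = 0`).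
In particular no `a j` is an eigenvalue of `A`. -/
theorem eigenvalues_iff_roots
    (m : ℕ) (hm : 1 ≤ m)
    (l : Fin (m + 1) → ℝ) (hl : ∀ i, 0 < l i)
    (q : Fin m → ℝ) (hq : ∀ j, 0 < q j)
    (N : Fin m → ℕ) (hN : ∀ j, 0 < N j)
    (a : Fin m → ℝ) (ha : ∀ j, a j = (N j : ℝ) * q j / l j.succ)
    (hdist : ∀ i j : Fin m, i ≠ j → a i ≠ a j)
    (F : ℂ → ℂ)
    (hF : ∀ lam : ℂ, F lam = 1 + ∑ i : Fin m,
      ((a i : ℂ) * (l i.succ : ℂ)) / ((l 0 : ℂ) * ((a i : ℂ) - lam)))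
    (A : Matrix (Fin (m + 1)) (Fin (m + 1)) ℝ)
    (hA00 : A 0 0 = (l 0)⁻¹ * ∑ j : Fin m, q j * (N j : ℝ))
    (hA0j : ∀ j : Fin m, A 0 j.succ = -(l 0)⁻¹ * (q j * (N j : ℝ)))
    (hAj0 : ∀ j : Fin m, A j.succ 0 = -(l j.succ)⁻¹ * (q j * (N j : ℝ)))
    (hAjj : ∀ j : Fin m, A j.succ j.succ = (l j.succ)⁻¹ * (q j * (N j : ℝ)))
    (hAjk : ∀ j k : Fin m, j ≠ k → A j.succ k.succ = 0) :
    (∀ lam : ℂ, Matrix.det ((A.map Complex.ofReal) - lam • 1) = 0 ↔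
      (lam = 0 ∨ ((∀ i : Fin m, lam ≠ (a i : ℂ)) ∧ F lam = 0))) ∧
    (∀ j : Fin m, Matrix.det ((A.map Complex.ofReal) - (a j : ℂ) • 1) ≠ 0) :=
  eigenvalues_iff_roots_general m l hl q hq N hN a ha hdist F hF A hA00 hA0j hAj0 hAjj hAjk
end

section
/- For every λ ∈ ℂ with λ ∉ {a_1, ..., a_m}, one has F(λ) = (Π_{j=1}^m (a_j − λ))^{-1} · Σ_{k=0}^m λ^{m−k} (−1)^{m−k} Σ_{S ⊆ {1,...,m}, |S| = k} (Π_{s ∈ S} a_s)(1 + l_0^{-1} Σ_{s ∈ S} l_s), where for k = 0 the inner sum is interpreted as 1. -/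
/-!
Grouping the subsets by size, the sum on the right is the expansion over subsets `S` of
`∏ (a_j - λ) + l₀⁻¹ ∑ᵢ lᵢ aᵢ ∏_{j ≠ i} (a_j - λ)`: the constant term `1` gives `∏ (a_j - λ)`,
and the subsets containing a fixed `i` give `aᵢ ∏_{j ≠ i} (a_j - λ)`.
Dividing by `∏ (a_j - λ)` gives the partial fractions of `F`.
-/

open Finset

namespace Finset

variable {ι R : Type*} [DecidableEq ι] [CommRing R]

theorem sum_powerset_prod_mul_prod_sdiff_mul_sum (s : Finset ι) (f g h : ι → R) :
    ∑ t ∈ s.powerset, (∏ i ∈ t, f i) * (∏ i ∈ s \ t, g i) * ∑ i ∈ t, h i =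
      ∑ i ∈ s, h i * f i * ∏ j ∈ s.erase i, (f j + g j) := by
  have hsub : ∀ t ∈ s.powerset, ∑ i ∈ t, h i = ∑ i ∈ s, if i ∈ t then h i else 0 := fun t ht => by
    rw [sum_ite_mem, inter_eq_right.2 (mem_powerset.1 ht)]
  -- Setting `g i = 0` turns the expansion of `∏ (f + g)` into its part over the subsets
  -- containing `i`.
  have hupdate : ∀ i ∈ s, ∀ t, ∏ j ∈ s \ t, Function.update g i 0 j =
      if i ∈ t then ∏ j ∈ s \ t, g j else 0 := by
    intro i hi t
    split_ifs with hit
    · refine prod_congr rfl fun j hj => Function.update_of_ne ?_ _ _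
      rintro rfl
      exact (mem_sdiff.1 hj).2 hit
    · exact prod_eq_zero (mem_sdiff.2 ⟨hi, hit⟩) (Function.update_self _ _ _)
  calc ∑ t ∈ s.powerset, (∏ i ∈ t, f i) * (∏ i ∈ s \ t, g i) * ∑ i ∈ t, h i
      = ∑ i ∈ s, h i * ∑ t ∈ s.powerset, (∏ j ∈ t, f j) * ∏ j ∈ s \ t, Function.update g i 0 j := by
        rw [sum_congr rfl fun t ht => by rw [hsub t ht, mul_sum], sum_comm]
        refine sum_congr rfl fun i hi => ?_
        rw [mul_sum]
        refine sum_congr rfl fun t _ => ?_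
        rw [hupdate i hi]
        split_ifs <;> ring
    _ = ∑ i ∈ s, h i * f i * ∏ j ∈ s.erase i, (f j + g j) := by
        refine sum_congr rfl fun i hi => ?_
        rw [← prod_add, ← mul_prod_erase s _ hi, Function.update_self, add_zero, mul_assoc]
        congr 2
        exact prod_congr rfl fun j hj => by rw [Function.update_of_ne (ne_of_mem_erase hj)]

theorem sum_range_pow_mul_sum_powersetCard_prod_mul_one_add_sum (s : Finset ι) (f g : ι → R)
    (x c : R) :
    ∑ k ∈ range (#s + 1), x ^ (#s - k) * (-1) ^ (#s - k) *
        ∑ t ∈ powersetCard k s, (∏ i ∈ t, f i) * (1 + c * ∑ i ∈ t, g i) =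
      ∏ i ∈ s, (f i - x) + c * ∑ i ∈ s, g i * f i * ∏ j ∈ s.erase i, (f j - x) := by
  have hcoeff : ∀ k, ∀ t ∈ powersetCard k s, x ^ (#s - k) * (-1) ^ (#s - k) = ∏ _i ∈ s \ t, -x :=
    fun k t ht => by
      rw [prod_const, card_sdiff_of_subset (mem_powersetCard.1 ht).1, (mem_powersetCard.1 ht).2]
      ring
  calc _ = ∑ t ∈ s.powerset, (∏ i ∈ t, f i) * (∏ _i ∈ s \ t, -x) * (1 + c * ∑ i ∈ t, g i) := by
        rw [sum_powerset]
        refine sum_congr rfl fun k _ => ?_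
        rw [mul_sum]
        refine sum_congr rfl fun t ht => ?_
        rw [hcoeff k t ht]
        ring
    _ = ∑ t ∈ s.powerset, (∏ i ∈ t, f i) * (∏ _i ∈ s \ t, -x) +
          c * ∑ t ∈ s.powerset, (∏ i ∈ t, f i) * (∏ _i ∈ s \ t, -x) * ∑ i ∈ t, g i := by
        rw [mul_sum, ← sum_add_distrib]
        exact sum_congr rfl fun t _ => by ring
    _ = _ := by
        rw [sum_powerset_prod_mul_prod_sdiff_mul_sum, ← prod_add]
        simp only [sub_eq_add_neg]

end Finset

theorem F_expansion_general
    (m : ℕ)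
    (l0 : ℝ)
    (l a : Fin m → ℝ)
    (F : ℂ → ℂ)
    (hF : ∀ lam : ℂ, F lam = 1 + ∑ i : Fin m,
      ((a i : ℂ) * (l i : ℂ)) / ((l0 : ℂ) * ((a i : ℂ) - lam)))
    (lam : ℂ) (hlam : ∀ i : Fin m, lam ≠ (a i : ℂ)) :
    F lam = (∏ j : Fin m, ((a j : ℂ) - lam))⁻¹ *
      ∑ k ∈ Finset.range (m + 1), lam ^ (m - k) * (-1 : ℂ) ^ (m - k) *
        ∑ S ∈ Finset.powersetCard k (Finset.univ : Finset (Fin m)),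
          ((∏ s ∈ S, (a s : ℂ)) * (1 + (l0 : ℂ)⁻¹ * ∑ s ∈ S, (l s : ℂ))) := by
  have hne : ∀ i : Fin m, (a i : ℂ) - lam ≠ 0 := fun i => sub_ne_zero.2 (hlam i).symm
  have hP : ∏ j : Fin m, ((a j : ℂ) - lam) ≠ 0 := prod_ne_zero_iff.2 fun i _ => hne i
  have hexpand := sum_range_pow_mul_sum_powersetCard_prod_mul_one_add_sum univ
    (fun i => (a i : ℂ)) (fun i => (l i : ℂ)) lam (l0 : ℂ)⁻¹
  rw [card_univ, Fintype.card_fin] at hexpand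
  rw [hF, hexpand, mul_add, inv_mul_cancel₀ hP, mul_sum, mul_sum]
  congr 1
  refine sum_congr rfl fun i _ => ?_
  have hQ : ∏ j ∈ univ.erase i, ((a j : ℂ) - lam) ≠ 0 := prod_ne_zero_iff.2 fun j _ => hne j
  rw [← mul_prod_erase univ _ (mem_univ i), mul_inv, div_eq_mul_inv, mul_inv]
  linear_combination (-((a i : ℂ) * l i * (l0 : ℂ)⁻¹ * ((a i : ℂ) - lam)⁻¹)) * inv_mul_cancel₀ hQ

/-- For `λ ∉ {a 1, ..., a m}`,
`F(λ) = (∏ j (a j - λ))⁻¹ ∑_{k=0}^m λ^(m-k) (-1)^(m-k)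
          ∑_{S ⊆ {1,...,m}, |S| = k} (∏_{s ∈ S} a s)(1 + l 0⁻¹ ∑_{s ∈ S} l s)`. -/
theorem F_expansion
    (m : ℕ) (hm : 1 ≤ m)
    (l0 : ℝ) (hl0 : 0 < l0)
    (l a : Fin m → ℝ) (hl : ∀ i, 0 < l i) (ha : ∀ i, 0 < a i)
    (hdist : ∀ i j : Fin m, i ≠ j → a i ≠ a j)
    (F : ℂ → ℂ)
    (hF : ∀ lam : ℂ, F lam = 1 + ∑ i : Fin m,
      ((a i : ℂ) * (l i : ℂ)) / ((l0 : ℂ) * ((a i : ℂ) - lam)))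
    (lam : ℂ) (hlam : ∀ i : Fin m, lam ≠ (a i : ℂ)) :
    F lam = (∏ j : Fin m, ((a j : ℂ) - lam))⁻¹ *
      ∑ k ∈ Finset.range (m + 1), lam ^ (m - k) * (-1 : ℂ) ^ (m - k) *
        ∑ S ∈ Finset.powersetCard k (Finset.univ : Finset (Fin m)),
          ((∏ s ∈ S, (a s : ℂ)) * (1 + (l0 : ℂ)⁻¹ * ∑ s ∈ S, (l s : ℂ))) :=
  F_expansion_general m l0 l a F hF lam hlam
end

section
/- For each j = 1, ..., m the quantity l_j := l_0 · ((β_j − α_j)/α_j) · Π_{i ∈ {1,...,m}, i ≠ j} (β_i − α_j)/(α_i − α_j) is a positive real number. -/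
/-!
Interlacing makes `α` strictly increasing with `β i < α j` whenever `i < j`. Hence for `i < j`
both `β i - α j` and `α i - α j` are negative, for `i > j` both are positive, so every factor of
the product is positive; the prefactor is positive because `α j ≥ α 0 > 0`.
-/

lemma Fin.strictMono_of_lt_next {γ : Type*} [Preorder γ] {m : ℕ} {f : Fin m → γ}
    (hf : ∀ j : Fin m, ∀ h : j.1 + 1 < m, f j < f ⟨j.1 + 1, h⟩) : StrictMono f := by
  cases m with
  | zero => exact fun i => i.elim0
  | succ n => exact Fin.strictMono_iff_lt_succ.2 fun i => hf i.castSucc (by simp)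

section Interlacing

variable {m : ℕ} {α β : Fin m → ℝ}
  (hαβ : ∀ j : Fin m, α j < β j) (hβα : ∀ j : Fin m, ∀ h : j.1 + 1 < m, β j < α ⟨j.1 + 1, h⟩)
include hαβ hβα

lemma strictMono_of_interlacing : StrictMono α :=
  Fin.strictMono_of_lt_next fun j h => (hαβ j).trans (hβα j h)

lemma beta_lt_alpha_of_lt {i j : Fin m} (hij : i < j) : β i < α j := by
  have hnext : i.1 + 1 < m := by omega
  calc β i < α ⟨i.1 + 1, hnext⟩ := hβα i hnext
    _ ≤ α j := (strictMono_of_interlacing hαβ hβα).monotone (Fin.mk_le_of_le_val hij)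

lemma div_sub_sub_pos_of_interlacing {i j : Fin m} (hij : i ≠ j) :
    0 < (β i - α j) / (α i - α j) := by
  have hα := strictMono_of_interlacing hαβ hβα
  rcases hij.lt_or_gt with hlt | hgt
  · exact div_pos_of_neg_of_neg (by linarith [beta_lt_alpha_of_lt hαβ hβα hlt])
      (by linarith [hα hlt])
  · exact div_pos (by linarith [hαβ i, hα hgt]) (by linarith [hα hgt])

end Interlacing

/-- Under the interlacing conditions, each
`l j = l0 ((β j - α j)/α j) ∏_{i ≠ j} (β i - α j)/(α i - α j)` is positive. -/
theorem lengths_positive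
    (m : ℕ) (hm : 0 < m)
    (l0 : ℝ) (hl0 : 0 < l0)
    (α β : Fin m → ℝ)
    (hα1 : 0 < α ⟨0, hm⟩)
    (hαβ : ∀ j : Fin m, α j < β j)
    (hβα : ∀ j : Fin m, ∀ h : j.1 + 1 < m, β j < α ⟨j.1 + 1, h⟩) :
    ∀ j : Fin m,
      0 < l0 * ((β j - α j) / α j) *
        ∏ i ∈ Finset.univ.erase j, (β i - α j) / (α i - α j) := by
  intro j
  have hα := strictMono_of_interlacing hαβ hβα
  have hαj : 0 < α j := hα1.trans_le (hα.monotone (Fin.mk_le_of_le_val (Nat.zero_le _)))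
  have hprefactor : 0 < (β j - α j) / α j := div_pos (sub_pos.2 (hαβ j)) hαj
  have hprod : 0 < ∏ i ∈ Finset.univ.erase j, (β i - α j) / (α i - α j) :=
    Finset.prod_pos fun i hi => div_sub_sub_pos_of_interlacing hαβ hβα (Finset.ne_of_mem_erase hi)
  positivity
end

section
/- Suppose real numbers x_1, ..., x_m satisfy the linear system 1 + Σ_{j=1}^m α_j x_j / (l_0 (α_j − β_i)) = 0 for every i = 1, ..., m. Then necessarily x_j = l_0 · ((β_j − α_j)/α_j) · Π_{i ∈ {1,...,m}, i ≠ j} (β_i − α_j)/(α_i − α_j) for each j = 1, ..., m; i.e. the system has a unique solution, given by this formula. -/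
/-!
Put `y j = α j x j / l0`. The system says that the polynomial
`P = ∏ k, (X - α k) - ∑ j, y j ∏ k ≠ j, (X - α k)` vanishes at every `β i`. Since `P` and
`∏ k, (X - β k)` are both monic of degree `m`, their difference has degree `< m` and vanishes at
the `m` distinct points `β i`, so `P = ∏ k, (X - β k)`. Evaluating at `α j` kills every term of
`P` except `-y j ∏ k ≠ j, (α j - α k)`, which determines `y j`. The interlacing of the `α`s and
`β`s supplies the distinctness of the nodes and `α j ≠ β i`.
-/

open Polynomial Finset Lagrange

section Interlacing

variable {γ : Type*} [Preorder γ] {m : ℕ}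

structure Interlacing (α β : Fin m → γ) : Prop where
  lt : ∀ j, α j < β j
  lt_succ : ∀ j : Fin m, ∀ h : j.1 + 1 < m, β j < α ⟨j.1 + 1, h⟩

variable {α β : Fin m → γ}

theorem Interlacing.strictMono_left (h : Interlacing α β) : StrictMono α := by
  cases m with
  | zero => exact fun i => i.elim0
  | succ n =>
    exact Fin.strictMono_iff_lt_succ.mpr fun i => (h.lt _).trans (h.lt_succ i.castSucc (by simp))

theorem Interlacing.right_lt_left (h : Interlacing α β) {i j : Fin m} (hij : i < j) :
    β i < α j :=
  (h.lt_succ i (by omega)).trans_le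
    (h.strictMono_left.monotone (Fin.le_def.mpr (by simpa using hij)))

theorem Interlacing.left_lt_right (h : Interlacing α β) {i j : Fin m} (hji : j ≤ i) :
    α j < β i :=
  (h.strictMono_left.monotone hji).trans_lt (h.lt i)

theorem Interlacing.strictMono_right (h : Interlacing α β) : StrictMono β :=
  fun _ _ hij => (h.right_lt_left hij).trans (h.lt _)

theorem Interlacing.left_ne_right (h : Interlacing α β) (i j : Fin m) : α j ≠ β i := by
  rcases lt_or_ge i j with hij | hji
  · exact (h.right_lt_left hij).ne'
  · exact (h.left_lt_right hji).ne

end Interlacing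

section Nodal

variable {R ι : Type*} [CommRing R] [Nontrivial R]

theorem degree_nodal_sub_nodal_lt (s : Finset ι) (α β : ι → R) :
    (nodal s α - nodal s β).degree < #s := by
  simpa only [degree_nodal] using degree_sub_lt_left (p := nodal s α) (q := nodal s β)
    (by simp only [degree_nodal]) nodal_ne_zero
    (by rw [nodal_monic.leadingCoeff, nodal_monic.leadingCoeff])

theorem degree_sum_smul_nodal_erase_lt [DecidableEq ι] (s : Finset ι) (α y : ι → R) :
    (∑ j ∈ s, y j • nodal (s.erase j) α).degree < #s := by
  rw [← mem_degreeLT]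
  refine Submodule.sum_mem _ fun j hj => Submodule.smul_mem _ _ ?_
  rw [mem_degreeLT, degree_nodal]
  exact_mod_cast card_erase_lt_of_mem hj

end Nodal

section CauchySystem

variable {F ι : Type*} [Field F] [DecidableEq ι] {s : Finset ι} {α β y : ι → F}

theorem eval_nodal_sub_sum_smul_nodal_erase_eq_zero {t : F} (hαt : ∀ j ∈ s, α j ≠ t)
    (h : 1 + ∑ j ∈ s, y j / (α j - t) = 0) :
    (nodal s α - ∑ j ∈ s, y j • nodal (s.erase j) α).eval t = 0 := by
  have key : ∀ j ∈ s, y j * (nodal (s.erase j) α).eval t =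
      -(nodal s α).eval t * (y j / (α j - t)) := by
    intro j hj
    rw [nodal_eq_mul_nodal_erase hj, eval_mul, eval_sub, eval_X, eval_C]
    field_simp [sub_ne_zero.mpr (hαt j hj)]
    ring
  simp only [eval_sub, eval_finsetSum, eval_smul, smul_eq_mul]
  rw [sum_congr rfl key, ← mul_sum]
  linear_combination (nodal s α).eval t * h

theorem nodal_sub_sum_smul_nodal_erase_eq_nodal (hβ : Set.InjOn β s)
    (hαβ : ∀ i ∈ s, ∀ j ∈ s, α j ≠ β i) (hy : ∀ i ∈ s, 1 + ∑ j ∈ s, y j / (α j - β i) = 0) :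
    nodal s α - ∑ j ∈ s, y j • nodal (s.erase j) α = nodal s β := by
  refine eq_of_degree_sub_lt_of_eval_index_eq s hβ ?_ fun i hi => ?_
  · rw [sub_right_comm, ← mem_degreeLT]
    exact Submodule.sub_mem _ (mem_degreeLT.mpr (degree_nodal_sub_nodal_lt s α β))
      (mem_degreeLT.mpr (degree_sum_smul_nodal_erase_lt s α y))
  · rw [eval_nodal_sub_sum_smul_nodal_erase_eq_zero (hαβ i hi) (hy i hi), eval_nodal_at_node hi]

theorem eq_mul_prod_div_of_one_add_sum_div_sub_eq_zero (hα : Set.InjOn α s)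
    (hβ : Set.InjOn β s) (hαβ : ∀ i ∈ s, ∀ j ∈ s, α j ≠ β i)
    (hy : ∀ i ∈ s, 1 + ∑ j ∈ s, y j / (α j - β i) = 0) {j : ι} (hj : j ∈ s) :
    y j = (β j - α j) * ∏ k ∈ s.erase j, (β k - α j) / (α k - α j) := by
  have h := congrArg (eval (α j)) (nodal_sub_sum_smul_nodal_erase_eq_nodal hβ hαβ hy)
  have hsum : ∑ k ∈ s, y k * (nodal (s.erase k) α).eval (α j) =
      y j * (nodal (s.erase j) α).eval (α j) :=
    sum_eq_single_of_mem j hj fun k _ hkj => by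
      rw [eval_nodal_at_node (mem_erase.mpr ⟨Ne.symm hkj, hj⟩), mul_zero]
  have hne : ∏ k ∈ s.erase j, (α j - α k) ≠ 0 :=
    prod_ne_zero_iff.mpr fun k hk => sub_ne_zero.mpr fun hjk =>
      (ne_of_mem_erase hk) (hα (mem_of_mem_erase hk) hj hjk.symm)
  simp only [eval_sub, eval_finsetSum, eval_smul, smul_eq_mul, eval_nodal_at_node hj] at h
  rw [hsum, eval_nodal, eval_nodal, ← mul_prod_erase s (fun k => α j - β k) hj] at h
  have hprod : ∏ k ∈ s.erase j, (β k - α j) / (α k - α j) =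
      (∏ k ∈ s.erase j, (α j - β k)) / ∏ k ∈ s.erase j, (α j - α k) := by
    rw [← prod_div_distrib]
    exact prod_congr rfl fun k _ => by rw [← neg_div_neg_eq, neg_sub, neg_sub]
  rw [hprod, mul_div_assoc', eq_div_iff hne]
  linear_combination -h

end CauchySystem

/-- If real numbers `x 1, ..., x m` satisfy the linear system
`1 + ∑ j, α j x j / (l0 (α j - β i)) = 0` for every `i`, then necessarily
`x j = l0 ((β j - α j)/α j) ∏_{i ≠ j} (β i - α j)/(α i - α j)`; i.e. the system has a
unique solution given by this formula. -/
theorem system_unique_solution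
    (m : ℕ) (hm : 0 < m)
    (l0 : ℝ) (hl0 : 0 < l0)
    (α β : Fin m → ℝ)
    (hα1 : 0 < α ⟨0, hm⟩)
    (hαβ : ∀ j : Fin m, α j < β j)
    (hβα : ∀ j : Fin m, ∀ h : j.1 + 1 < m, β j < α ⟨j.1 + 1, h⟩)
    (x : Fin m → ℝ)
    (hx : ∀ i : Fin m, 1 + ∑ j : Fin m, α j * x j / (l0 * (α j - β i)) = 0) :
    ∀ j : Fin m, x j = l0 * ((β j - α j) / α j) *
      ∏ i ∈ Finset.univ.erase j, (β i - α j) / (α i - α j) := by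
  have hI : Interlacing α β := ⟨hαβ, hβα⟩
  intro j
  have hαj : α j ≠ 0 :=
    (hα1.trans_le (hI.strictMono_left.monotone (Fin.le_def.mpr (Nat.zero_le _)))).ne'
  have hy := eq_mul_prod_div_of_one_add_sum_div_sub_eq_zero (s := univ)
    (y := fun j => α j * x j / l0) hI.strictMono_left.injective.injOn
    hI.strictMono_right.injective.injOn (fun i _ j _ => hI.left_ne_right i j)
    (fun i _ => by simpa only [div_mul_eq_div_div] using hx i) (mem_univ j)
  field_simp at hy ⊢
  linear_combination hy
end

section
/- Define l_j := l_0 · ((β_j − α_j)/α_j) · Π_{i ∈ {1,...,m}, i ≠ j} (β_i − α_j)/(α_i − α_j) for j = 1, ..., m, and define F(λ) := 1 + Σ_{j=1}^m α_j l_j / (l_0 (α_j − λ)) for λ ∈ ℂ \ {α_1, ..., α_m}. Then for λ ∈ ℂ \ {α_1, ..., α_m} one has F(λ) = 0 if and only if λ ∈ {β_1, ..., β_m}; i.e. the roots of F are exactly the prescribed numbers β_1, ..., β_m. -/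
/-!
For distinct nodes `a`, the polynomial `∏ (X - b i) - ∏ (X - a i)` has degree below the number
of nodes, so it equals its Lagrange interpolant; evaluated off the nodes this is the partial
fraction expansion `∏ (x - b i) / (x - a i) = 1 + ∑ c j / (a j - x)`, and the residues `c j` are
exactly `α j * l j / l0`. Hence `F λ = ∏ (λ - β i) / (λ - α i)`, which vanishes exactly at the `β j`.
-/

open Finset Polynomial Lagrange

variable {F ι : Type*} [Field F] [DecidableEq ι] {s : Finset ι} {a : ι → F}

theorem Lagrange.prod_div_eq_one_add_sum_nodalWeight (b : ι → F) (ha : Set.InjOn a s) {x : F}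
    (hx : ∀ i ∈ s, x ≠ a i) :
    ∏ i ∈ s, (x - b i) / (x - a i) =
      1 + ∑ j ∈ s, nodalWeight s a j * (nodal s b).eval (a j) / (x - a j) := by
  have hdeg : (nodal s b - nodal s a).degree < #s := by
    rw [← degree_nodal (v := b)]
    exact degree_sub_lt_left (by rw [degree_nodal, degree_nodal]) nodal_ne_zero
      (by rw [nodal_monic.leadingCoeff, nodal_monic.leadingCoeff])
  have key := congrArg (eval x) (eq_interpolate ha hdeg)
  rw [eval_interpolate_not_at_node _ hx, eval_sub, sub_eq_iff_eq_add'] at key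
  rw [prod_div_distrib, ← eval_nodal, ← eval_nodal, key, add_div,
    div_self (eval_nodal_not_at_node hx), mul_div_cancel_left₀ _ (eval_nodal_not_at_node hx)]
  congr 1
  refine sum_congr rfl fun j hj => ?_
  rw [eval_sub, eval_nodal_at_node hj, sub_zero, div_eq_mul_inv, mul_right_comm]

theorem Lagrange.nodalWeight_mul_eval_nodal {j : ι} (hj : j ∈ s) (b : ι → F) :
    nodalWeight s a j * (nodal s b).eval (a j) =
      (a j - b j) * ∏ i ∈ s.erase j, (b i - a j) / (a i - a j) := by
  rw [nodalWeight, eval_nodal, ← mul_prod_erase s _ hj, mul_left_comm, ← prod_mul_distrib]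
  congr 1
  refine prod_congr rfl fun i _ => ?_
  rw [← neg_sub (a j) (b i), ← neg_sub (a j) (a i), neg_div_neg_eq, div_eq_inv_mul]

theorem prod_div_sub_eq_one_add_sum (b : ι → F) (ha : Set.InjOn a s) {x : F}
    (hx : ∀ i ∈ s, x ≠ a i) :
    ∏ i ∈ s, (x - b i) / (x - a i) =
      1 + ∑ j ∈ s, ((b j - a j) * ∏ i ∈ s.erase j, (b i - a j) / (a i - a j)) / (a j - x) := by
  rw [prod_div_eq_one_add_sum_nodalWeight b ha hx]
  congr 1
  refine sum_congr rfl fun j hj => ?_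
  rw [nodalWeight_mul_eval_nodal hj, ← neg_div_neg_eq, neg_mul_eq_neg_mul, neg_sub, neg_sub]

omit [DecidableEq ι] in
theorem prod_div_sub_eq_zero_iff {b : ι → F} {x : F} (hx : ∀ i ∈ s, x ≠ a i) :
    ∏ i ∈ s, (x - b i) / (x - a i) = 0 ↔ ∃ i ∈ s, x = b i := by
  simp only [prod_eq_zero_iff, div_eq_zero_iff, sub_eq_zero]
  exact exists_congr fun i => and_congr_right fun hi => or_iff_left (hx i hi)

theorem Fin.strictMono_of_interlaced {γ : Type*} [Preorder γ] {m : ℕ} {α β : Fin m → γ}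
    (hαβ : ∀ j, α j < β j) (hβα : ∀ j : Fin m, ∀ h : j.1 + 1 < m, β j < α ⟨j.1 + 1, h⟩) :
    StrictMono α := by
  cases m with
  | zero => exact fun i => i.elim0
  | succ n => exact Fin.strictMono_iff_lt_succ.mpr fun i => (hαβ _).trans (hβα _ (by simp))

/-- With `l j = l0 ((β j - α j)/α j) ∏_{i ≠ j} (β i - α j)/(α i - α j)` and
`F(λ) = 1 + ∑ j, α j l j / (l0 (α j - λ))`, for `λ ∈ ℂ \ {α 1, ..., α m}` one has
`F(λ) = 0` iff `λ ∈ {β 1, ..., β m}`. -/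
theorem roots_are_prescribed
    (m : ℕ) (hm : 0 < m)
    (l0 : ℝ) (hl0 : 0 < l0)
    (α β : Fin m → ℝ)
    (hα1 : 0 < α ⟨0, hm⟩)
    (hαβ : ∀ j : Fin m, α j < β j)
    (hβα : ∀ j : Fin m, ∀ h : j.1 + 1 < m, β j < α ⟨j.1 + 1, h⟩)
    (l : Fin m → ℝ)
    (hldef : ∀ j : Fin m, l j = l0 * ((β j - α j) / α j) *
      ∏ i ∈ Finset.univ.erase j, (β i - α j) / (α i - α j))
    (F : ℂ → ℂ)
    (hF : ∀ lam : ℂ, F lam = 1 + ∑ j : Fin m,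
      ((α j : ℂ) * (l j : ℂ)) / ((l0 : ℂ) * ((α j : ℂ) - lam))) :
    ∀ lam : ℂ, (∀ i : Fin m, lam ≠ (α i : ℂ)) →
      (F lam = 0 ↔ ∃ j : Fin m, lam = (β j : ℂ)) := by
  intro lam hlam
  have hmono : StrictMono α := Fin.strictMono_of_interlaced hαβ hβα
  have hpos (j : Fin m) : 0 < α j := hα1.trans_le (hmono.monotone (Nat.zero_le j.1))
  have hinj : Set.InjOn (fun j => (α j : ℂ)) (univ : Finset (Fin m)) :=
    (Complex.ofReal_injective.comp hmono.injective).injOn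
  have hnode : ∀ i ∈ (univ : Finset (Fin m)), lam ≠ (α i : ℂ) := fun i _ => hlam i
  have hterm (j : Fin m) : ((α j : ℂ) * (l j : ℂ)) / ((l0 : ℂ) * ((α j : ℂ) - lam)) =
      (((β j : ℂ) - α j) * ∏ i ∈ univ.erase j, ((β i : ℂ) - α j) / ((α i : ℂ) - α j)) /
        ((α j : ℂ) - lam) := by
    have hαj : (α j : ℂ) ≠ 0 := Complex.ofReal_ne_zero.mpr (hpos j).ne'
    have hl0' : (l0 : ℂ) ≠ 0 := Complex.ofReal_ne_zero.mpr hl0.ne'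
    rw [hldef j]
    push_cast
    field_simp
  rw [hF, sum_congr rfl fun j _ => hterm j, ← prod_div_sub_eq_one_add_sum _ hinj hnode,
    prod_div_sub_eq_zero_iff hnode]
  simp
end
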